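/- The family CF_cb of capacity-bounded context-free languages is closed under concatenation: if L₁, L₂ ∈ CF_cb then L₁ · L₂ ∈ CF_cb. -/

import Mathlib

/-! Common definitions: symbols, context-free grammars, Ginsburg–Spanier phrase
structure grammars, capacity-bounded derivations, matrix/vector grammars,
finite index, cf Petri nets with place capacities, and language families. -/

inductive Symb (N T : Type) where
  | nt : N → Symb N T
  | tm : T → Symb N T
deriving DecidableEq

namespace CapGram

variable {N T Δ α : Type}

open Classical in
/-- Number of occurrences of the nonterminal `A` in a sentential form. -/
noncomputable def symCount (A : N) : List (Symb N T) → ℕ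
  | [] => 0
  | Symb.nt B :: r => (if B = A then 1 else 0) + symCount A r
  | Symb.tm _ :: r => symCount A r

/-- Total number of nonterminal occurrences in a sentential form. -/
def ntCount : List (Symb N T) → ℕ
  | [] => 0
  | Symb.nt _ :: r => 1 + ntCount r
  | Symb.tm _ :: r => ntCount r

/-- The sentential form `w` respects the capacity function `κ`. -/
def CapOK (κ : N → ℕ) (w : List (Symb N T)) : Prop :=
  ∀ A : N, symCount A w ≤ κ A

/-- A context-free grammar (rules are pairs of a nonterminal and a word). -/
structure CFG (N T : Type) where
  start : N
  rules : Finset (N × List (Symb N T))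

/-- Application of a single context-free rule. -/
def applyRule (r : N × List (Symb N T)) (u v : List (Symb N T)) : Prop :=
  ∃ x y : List (Symb N T), u = x ++ Symb.nt r.1 :: y ∧ v = x ++ r.2 ++ y

def CFG.Step (G : CFG N T) (u v : List (Symb N T)) : Prop :=
  ∃ r ∈ G.rules, applyRule r u v

/-- A derivation step both of whose sentential forms respect the capacity. -/
def CFG.CapStep (G : CFG N T) (κ : N → ℕ) (u v : List (Symb N T)) : Prop :=
  G.Step u v ∧ CapOK κ u ∧ CapOK κ v

/-- A derivation step both of whose sentential forms have at most `k`
nonterminal occurrences in total. -/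
def CFG.IdxStep (G : CFG N T) (k : ℕ) (u v : List (Symb N T)) : Prop :=
  G.Step u v ∧ ntCount u ≤ k ∧ ntCount v ≤ k

/-- The (unrestricted) language of a context-free grammar. -/
def CFG.Lang (G : CFG N T) : Set (List T) :=
  { w | Relation.ReflTransGen G.Step [Symb.nt G.start] (w.map Symb.tm) }

/-- The language of the capacity-bounded grammar `(G, κ)`. -/
def CFG.CapLang (G : CFG N T) (κ : N → ℕ) : Set (List T) :=
  { w | Relation.ReflTransGen (G.CapStep κ) [Symb.nt G.start] (w.map Symb.tm) }

/-- Words with a derivation of index at most `k`. -/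
def CFG.FinLang (G : CFG N T) (k : ℕ) : Set (List T) :=
  { w | Relation.ReflTransGen (G.IdxStep k) [Symb.nt G.start] (w.map Symb.tm) }

/-- A phrase structure grammar due to Ginsburg and Spanier: the left-hand side
of a rule is a nonempty word of nonterminals, encoded as head and tail. -/
structure GSG (N T : Type) where
  start : N
  rules : Finset ((N × List N) × List (Symb N T))

def GSG.Step (G : GSG N T) (u v : List (Symb N T)) : Prop :=
  ∃ r ∈ G.rules, ∃ x y : List (Symb N T),
    u = x ++ (r.1.1 :: r.1.2).map Symb.nt ++ y ∧ v = x ++ r.2 ++ y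

def GSG.CapStep (G : GSG N T) (κ : N → ℕ) (u v : List (Symb N T)) : Prop :=
  G.Step u v ∧ CapOK κ u ∧ CapOK κ v

def GSG.Lang (G : GSG N T) : Set (List T) :=
  { w | Relation.ReflTransGen G.Step [Symb.nt G.start] (w.map Symb.tm) }

def GSG.CapLang (G : GSG N T) (κ : N → ℕ) : Set (List T) :=
  { w | Relation.ReflTransGen (G.CapStep κ) [Symb.nt G.start] (w.map Symb.tm) }

/-- Derivations labeled by their sequence of context-free rules, where every
sentential form (including the first and last) satisfies the invariant `P`. -/
inductive DerivP (P : List (Symb N T) → Prop) :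
    List (N × List (Symb N T)) → List (Symb N T) → List (Symb N T) → Prop
  | nil (u : List (Symb N T)) : P u → DerivP P [] u u
  | cons {r π u v w} : P u → applyRule r u v → DerivP P π v w →
      DerivP P (r :: π) u w

/-- A matrix grammar: a finite set of matrices (sequences of cf rules). -/
structure MG (N T : Type) where
  start : N
  mats : Finset (List (N × List (Symb N T)))

/-- Matrix language: rule sequences are concatenations of matrices. -/
def MG.Lang (G : MG N T) : Set (List T) :=
  { w | ∃ ms : List (List (N × List (Symb N T))),
      (∀ m ∈ ms, m ∈ G.mats) ∧
      DerivP (fun _ => True) ms.flatten [Symb.nt G.start] (w.map Symb.tm) }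

/-- Words with a matrix derivation of index at most `k`. -/
def MG.FinLang (G : MG N T) (k : ℕ) : Set (List T) :=
  { w | ∃ ms : List (List (N × List (Symb N T))),
      (∀ m ∈ ms, m ∈ G.mats) ∧
      DerivP (fun u => ntCount u ≤ k) ms.flatten [Symb.nt G.start] (w.map Symb.tm) }

/-- `Shuffle ms π`: `π` is an interleaving (shuffle) of the lists in `ms`. -/
inductive Shuffle : List (List α) → List α → Prop
  | nil (ms : List (List α)) : (∀ l ∈ ms, l = []) → Shuffle ms []
  | cons {ms₁ : List (List α)} {l : List α} {ms₂ : List (List α)} {π : List α}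
      (a : α) : Shuffle (ms₁ ++ l :: ms₂) π →
      Shuffle (ms₁ ++ (a :: l) :: ms₂) (a :: π)

/-- A vector grammar: like a matrix grammar, but derivations use shuffles. -/
structure VG (N T : Type) where
  start : N
  mats : Finset (List (N × List (Symb N T)))

def VG.Lang (G : VG N T) : Set (List T) :=
  { w | ∃ ms π, (∀ m ∈ ms, m ∈ G.mats) ∧ Shuffle ms π ∧
      DerivP (fun _ => True) π [Symb.nt G.start] (w.map Symb.tm) }

def VG.CapLang (G : VG N T) (κ : N → ℕ) : Set (List T) :=
  { w | ∃ ms π, (∀ m ∈ ms, m ∈ G.mats) ∧ Shuffle ms π ∧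
      DerivP (CapOK κ) π [Symb.nt G.start] (w.map Symb.tm) }

def VG.FinLang (G : VG N T) (k : ℕ) : Set (List T) :=
  { w | ∃ ms π, (∀ m ∈ ms, m ∈ G.mats) ∧ Shuffle ms π ∧
      DerivP (fun u => ntCount u ≤ k) π [Symb.nt G.start] (w.map Symb.tm) }

/-! cf Petri nets: places are in bijection with the nonterminals, transitions
with the rules; firing the transition of rule `A → α` consumes one token from
the place of `A` and adds `|α|_X` tokens to the place of each nonterminal `X`. -/

open Classical in
/-- Firing of the transition corresponding to rule `r`, turning marking `μ`
into marking `μ'`. -/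
noncomputable def ruleFire (r : N × List (Symb N T)) (μ μ' : N → ℕ) : Prop :=
  1 ≤ μ r.1 ∧ ∀ A, μ' A = μ A - (if A = r.1 then 1 else 0) + symCount A r.2

/-- Occurrence sequences of the cf Petri net of `G`, all of whose markings
(including initial and final) satisfy the validity predicate `P`. -/
inductive FireSeqP (G : CFG N T) (P : (N → ℕ) → Prop) :
    List (N × List (Symb N T)) → (N → ℕ) → (N → ℕ) → Prop
  | nil (μ : N → ℕ) : P μ → FireSeqP G P [] μ μ
  | cons {r π μ μ' μ''} : r ∈ G.rules → P μ → ruleFire r μ μ' →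
      FireSeqP G P π μ' μ'' → FireSeqP G P (r :: π) μ μ''

open Classical in
/-- The initial marking: one token on the place of the start symbol. -/
noncomputable def initMark (G : CFG N T) : N → ℕ :=
  fun A => if A = G.start then 1 else 0

/-- The language of `G` controlled by its cf Petri net restricted to markings
satisfying `P` (e.g. a place capacity constraint). -/
def CFG.PNLang (G : CFG N T) (P : (N → ℕ) → Prop) : Set (List T) :=
  { w | ∃ π μ, DerivP (fun _ => True) π [Symb.nt G.start] (w.map Symb.tm) ∧
      FireSeqP G P π (initMark G) μ }

/-! Language families over a terminal alphabet `T`. -/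

/-- Context-free languages of finite index. -/
def CFfin (T : Type) : Set (Set (List T)) :=
  { L | ∃ (N : Type) (_ : Fintype N) (G : CFG N T) (k : ℕ),
      L = G.Lang ∧ G.Lang ⊆ G.FinLang k }

/-- Languages of capacity-bounded context-free grammars. -/
def CFcb (T : Type) : Set (Set (List T)) :=
  { L | ∃ (N : Type) (_ : Fintype N) (G : CFG N T) (κ : N → ℕ),
      L = G.CapLang κ }

/-- Languages of capacity-bounded Ginsburg–Spanier phrase structure grammars. -/
def GScb (T : Type) : Set (Set (List T)) :=
  { L | ∃ (N : Type) (_ : Fintype N) (G : GSG N T) (κ : N → ℕ),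
      L = G.CapLang κ }

/-- Matrix languages of finite index. -/
def MATfin (T : Type) : Set (Set (List T)) :=
  { L | ∃ (N : Type) (_ : Fintype N) (G : MG N T) (k : ℕ),
      L = G.Lang ∧ G.Lang ⊆ G.FinLang k }

/-- Capacity-bounded vector languages (erasing rules allowed). -/
def Vcb (T : Type) : Set (Set (List T)) :=
  { L | ∃ (N : Type) (_ : Fintype N) (G : VG N T) (κ : N → ℕ),
      L = G.CapLang κ }

/-- Vector languages of finite index (erasing rules allowed). -/
def Vfin (T : Type) : Set (Set (List T)) :=
  { L | ∃ (N : Type) (_ : Fintype N) (G : VG N T) (k : ℕ),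
      L = G.Lang ∧ G.Lang ⊆ G.FinLang k }

/-- Languages of grammars controlled by cf Petri nets with place capacities. -/
def PNcap (T : Type) : Set (Set (List T)) :=
  { L | ∃ (N : Type) (_ : Fintype N) (G : CFG N T) (κ : N → ℕ),
      L = G.PNLang (fun μ => ∀ A, μ A ≤ κ A) }


/-! ### Auxiliary development for closure under concatenation -/

section Concat

variable {T N₁ N₂ : Type}

/-- Embed symbols of the first grammar into the combined alphabet. -/
def emb1 : Symb N₁ T → Symb (Option (N₁ ⊕ N₂)) T
  | .nt A => .nt (some (Sum.inl A))
  | .tm a => .tm a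

/-- Embed symbols of the second grammar into the combined alphabet. -/
def emb2 : Symb N₂ T → Symb (Option (N₁ ⊕ N₂)) T
  | .nt B => .nt (some (Sum.inr B))
  | .tm a => .tm a

/-- Combined capacity function. -/
def κJoin (κ₁ : N₁ → ℕ) (κ₂ : N₂ → ℕ) : Option (N₁ ⊕ N₂) → ℕ
  | none => 1
  | some (Sum.inl A) => κ₁ A
  | some (Sum.inr B) => κ₂ B

/-- The combined grammar for concatenation. -/
noncomputable def concatG (G₁ : CFG N₁ T) (G₂ : CFG N₂ T) :
    CFG (Option (N₁ ⊕ N₂)) T :=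
  letI := Classical.decEq (Option (N₁ ⊕ N₂) × List (Symb (Option (N₁ ⊕ N₂)) T))
  { start := none
    rules := insert
      (none, [Symb.nt (some (Sum.inl G₁.start)), Symb.nt (some (Sum.inr G₂.start))])
      ((G₁.rules.image fun r => (some (Sum.inl r.1), r.2.map emb1)) ∪
       (G₂.rules.image fun r => (some (Sum.inr r.1), r.2.map emb2))) }

lemma mem_concatG_rules {G₁ : CFG N₁ T} {G₂ : CFG N₂ T}
    {r : Option (N₁ ⊕ N₂) × List (Symb (Option (N₁ ⊕ N₂)) T)} :
    r ∈ (concatG G₁ G₂).rules ↔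
      r = (none, [Symb.nt (some (Sum.inl G₁.start)), Symb.nt (some (Sum.inr G₂.start))]) ∨
      (∃ r₁ ∈ G₁.rules, r = (some (Sum.inl r₁.1), r₁.2.map emb1)) ∨
      (∃ r₂ ∈ G₂.rules, r = (some (Sum.inr r₂.1), r₂.2.map emb2)) := by
  simp only [concatG, Finset.mem_insert, Finset.mem_union, Finset.mem_image]
  constructor
  · rintro (h | ⟨⟨r₁, h₁, h⟩ | ⟨r₂, h₂, h⟩⟩)
    · exact Or.inl h
    · exact Or.inr (Or.inl ⟨r₁, h₁, h.symm⟩)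
    · exact Or.inr (Or.inr ⟨r₂, h₂, h.symm⟩)
  · rintro (h | ⟨r₁, h₁, h⟩ | ⟨r₂, h₂, h⟩)
    · exact Or.inl h
    · exact Or.inr (Or.inl ⟨r₁, h₁, h.symm⟩)
    · exact Or.inr (Or.inr ⟨r₂, h₂, h.symm⟩)

lemma symCount_append {N : Type} (A : N) (x y : List (Symb N T)) :
    symCount A (x ++ y) = symCount A x + symCount A y := by
  induction x with
  | nil => simp [symCount]
  | cons s t ih => cases s <;> simp [symCount, ih] <;> omega

lemma symCount_map_tm {N : Type} (c : N) (w : List T) :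
    symCount c (w.map Symb.tm) = 0 := by
  induction w with
  | nil => simp [symCount]
  | cons a w ih => simpa [symCount] using ih

lemma symCount_inl_emb1 (A : N₁) (α : List (Symb N₁ T)) :
    symCount (some (Sum.inl A) : Option (N₁ ⊕ N₂)) (α.map emb1) = symCount A α := by
  induction α with
  | nil => simp [symCount]
  | cons s t ih =>
    cases s with
    | nt a =>
      simp only [List.map_cons, emb1, symCount, ih]
      by_cases h : a = A <;> simp [h]
    | tm a => simpa [emb1, symCount] using ih

lemma symCount_not_inl_emb1 (c : Option (N₁ ⊕ N₂)) (hc : ∀ A, c ≠ some (Sum.inl A))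
    (α : List (Symb N₁ T)) : symCount c (α.map emb1) = 0 := by
  induction α with
  | nil => simp [symCount]
  | cons s t ih =>
    cases s with
    | nt A => simpa [emb1, symCount, (hc A).symm] using ih
    | tm a => simpa [emb1, symCount] using ih

lemma symCount_inr_emb2 (B : N₂) (β : List (Symb N₂ T)) :
    symCount (some (Sum.inr B) : Option (N₁ ⊕ N₂)) (β.map emb2) = symCount B β := by
  induction β with
  | nil => simp [symCount]
  | cons s t ih =>
    cases s with
    | nt b =>
      simp only [List.map_cons, emb2, symCount, ih]
      by_cases h : b = B <;> simp [h]
    | tm a => simpa [emb2, symCount] using ih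

lemma symCount_not_inr_emb2 (c : Option (N₁ ⊕ N₂)) (hc : ∀ B, c ≠ some (Sum.inr B))
    (β : List (Symb N₂ T)) : symCount c (β.map emb2) = 0 := by
  induction β with
  | nil => simp [symCount]
  | cons s t ih =>
    cases s with
    | nt B => simpa [emb2, symCount, (hc B).symm] using ih
    | tm a => simpa [emb2, symCount] using ih

lemma capOK_join {κ₁ : N₁ → ℕ} {κ₂ : N₂ → ℕ} {α : List (Symb N₁ T)}
    {β : List (Symb N₂ T)} :
    CapOK (κJoin κ₁ κ₂) (α.map emb1 ++ β.map emb2) ↔ CapOK κ₁ α ∧ CapOK κ₂ β := by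
  constructor
  · intro h
    refine ⟨fun A => ?_, fun B => ?_⟩
    · have := h (some (Sum.inl A))
      rwa [symCount_append, symCount_inl_emb1,
        symCount_not_inr_emb2 _ (by simp), Nat.add_zero] at this
    · have := h (some (Sum.inr B))
      rwa [symCount_append, symCount_not_inl_emb1 _ (by simp),
        symCount_inr_emb2, Nat.zero_add] at this
  · rintro ⟨h₁, h₂⟩ c
    rw [symCount_append]
    match c with
    | none =>
      rw [symCount_not_inl_emb1 _ (by simp), symCount_not_inr_emb2 _ (by simp)]
      exact Nat.zero_le _
    | some (Sum.inl A) =>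
      rw [symCount_inl_emb1, symCount_not_inr_emb2 _ (by simp), Nat.add_zero]
      exact h₁ A
    | some (Sum.inr B) =>
      rw [symCount_not_inl_emb1 _ (by simp), symCount_inr_emb2, Nat.zero_add]
      exact h₂ B

lemma capOK_tm_emb2 {κ₁ : N₁ → ℕ} {κ₂ : N₂ → ℕ} {t : List T} {β : List (Symb N₂ T)}
    (h₂ : CapOK κ₂ β) :
    CapOK (κJoin κ₁ κ₂) (t.map Symb.tm ++ β.map emb2) := by
  intro c
  rw [symCount_append, symCount_map_tm, Nat.zero_add]
  match c with
  | none => rw [symCount_not_inr_emb2 _ (by simp)]; exact Nat.zero_le _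
  | some (Sum.inl A) => rw [symCount_not_inr_emb2 _ (by simp)]; exact Nat.zero_le _
  | some (Sum.inr B) => rw [symCount_inr_emb2]; exact h₂ B

lemma nt_mem_emb1 {c : Option (N₁ ⊕ N₂)} {α : List (Symb N₁ T)}
    (h : Symb.nt c ∈ α.map emb1) : ∃ A, c = some (Sum.inl A) := by
  rcases List.mem_map.mp h with ⟨s, _, hs⟩
  cases s with
  | nt A => exact ⟨A, (Symb.nt.injEq _ _ ▸ hs.symm : c = _)⟩
  | tm a => simp [emb1] at hs

lemma nt_mem_emb2 {c : Option (N₁ ⊕ N₂)} {β : List (Symb N₂ T)}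
    (h : Symb.nt c ∈ β.map emb2) : ∃ B, c = some (Sum.inr B) := by
  rcases List.mem_map.mp h with ⟨s, _, hs⟩
  cases s with
  | nt B => exact ⟨B, (Symb.nt.injEq _ _ ▸ hs.symm : c = _)⟩
  | tm a => simp [emb2] at hs

lemma map_emb1_eq_split {α : List (Symb N₁ T)}
    {x t : List (Symb (Option (N₁ ⊕ N₂)) T)} {A : N₁}
    (h : α.map emb1 = x ++ Symb.nt (some (Sum.inl A)) :: t) :
    ∃ α₁ α₂, α = α₁ ++ Symb.nt A :: α₂ ∧ x = α₁.map emb1 ∧ t = α₂.map emb1 := by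
  induction α generalizing x with
  | nil => simp at h
  | cons s α ih =>
    cases x with
    | nil =>
      simp only [List.map_cons, List.nil_append, List.cons.injEq] at h
      cases s with
      | nt A' =>
        simp only [emb1, Symb.nt.injEq, Option.some.injEq, Sum.inl.injEq] at h
        exact ⟨[], α, by simp [h.1, h.2], rfl, h.2.symm⟩
      | tm a => simp [emb1] at h
    | cons x0 x' =>
      simp only [List.map_cons, List.cons_append, List.cons.injEq] at h
      obtain ⟨α₁, α₂, h1, h2, h3⟩ := ih h.2
      exact ⟨s :: α₁, α₂, by simp [h1], by simp [h.1.symm, h2], h3⟩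

lemma map_emb2_eq_split {β : List (Symb N₂ T)}
    {x t : List (Symb (Option (N₁ ⊕ N₂)) T)} {B : N₂}
    (h : β.map emb2 = x ++ Symb.nt (some (Sum.inr B)) :: t) :
    ∃ β₁ β₂, β = β₁ ++ Symb.nt B :: β₂ ∧ x = β₁.map emb2 ∧ t = β₂.map emb2 := by
  induction β generalizing x with
  | nil => simp at h
  | cons s β ih =>
    cases x with
    | nil =>
      simp only [List.map_cons, List.nil_append, List.cons.injEq] at h
      cases s with
      | nt B' =>
        simp only [emb2, Symb.nt.injEq, Option.some.injEq, Sum.inr.injEq] at h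
        exact ⟨[], β, by simp [h.1, h.2], rfl, h.2.symm⟩
      | tm a => simp [emb2] at h
    | cons x0 x' =>
      simp only [List.map_cons, List.cons_append, List.cons.injEq] at h
      obtain ⟨β₁, β₂, h1, h2, h3⟩ := ih h.2
      exact ⟨s :: β₁, β₂, by simp [h1], by simp [h.1.symm, h2], h3⟩

lemma map_emb1_eq_map_tm {α : List (Symb N₁ T)} {w : List T}
    (h : α.map (emb1 (N₂ := N₂)) = w.map Symb.tm) : α = w.map Symb.tm := by
  induction α generalizing w with
  | nil => cases w with | nil => rfl | cons a w => exact absurd h (by simp)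
  | cons s α ih =>
    cases w with
    | nil => simp at h
    | cons a w =>
      simp only [List.map_cons, List.cons.injEq] at h
      cases s with
      | nt A => simp [emb1] at h
      | tm b =>
        simp only [emb1, Symb.tm.injEq] at h
        simp [h.1, ih h.2]

lemma map_emb2_eq_map_tm {β : List (Symb N₂ T)} {w : List T}
    (h : β.map (emb2 (N₁ := N₁)) = w.map Symb.tm) : β = w.map Symb.tm := by
  induction β generalizing w with
  | nil => cases w with | nil => rfl | cons a w => exact absurd h (by simp)
  | cons s β ih =>
    cases w with
    | nil => simp at h
    | cons a w =>
      simp only [List.map_cons, List.cons.injEq] at h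
      cases s with
      | nt B => simp [emb2] at h
      | tm b =>
        simp only [emb2, Symb.tm.injEq] at h
        simp [h.1, ih h.2]

variable {G₁ : CFG N₁ T} {G₂ : CFG N₂ T} {κ₁ : N₁ → ℕ} {κ₂ : N₂ → ℕ}

/-- Main forward decomposition lemma. -/
lemma forward_main {u z : List (Symb (Option (N₁ ⊕ N₂)) T)}
    (h : Relation.ReflTransGen ((concatG G₁ G₂).CapStep (κJoin κ₁ κ₂)) u z) :
    ∀ (α : List (Symb N₁ T)) (β : List (Symb N₂ T)) (w : List T),
      u = α.map emb1 ++ β.map emb2 → z = w.map Symb.tm →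
      ∃ w₁ w₂, w = w₁ ++ w₂ ∧
        Relation.ReflTransGen (G₁.CapStep κ₁) α (w₁.map Symb.tm) ∧
        Relation.ReflTransGen (G₂.CapStep κ₂) β (w₂.map Symb.tm) := by
  induction h using Relation.ReflTransGen.head_induction_on with
  | refl =>
    intro α β w hu hz
    rw [hz] at hu
    obtain ⟨w₁, w₂, hw, h1, h2⟩ := List.map_eq_append_iff.mp hu
    refine ⟨w₁, w₂, hw, ?_, ?_⟩
    · rw [map_emb1_eq_map_tm h1.symm]
    · rw [map_emb2_eq_map_tm h2.symm]
  | head hstep _ ih =>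
    intro α β w hu hz
    obtain ⟨⟨r, hr, x, y, hux, hv⟩, hcu, hcv⟩ := hstep
    subst hu
    rcases mem_concatG_rules.mp hr with h0 | ⟨r₁, hr₁, he⟩ | ⟨r₂, hr₂, he⟩
    · -- start rule: its left-hand side `none` cannot occur
      exfalso
      have hmem : Symb.nt (none : Option (N₁ ⊕ N₂)) ∈ α.map emb1 ++ β.map emb2 := by
        rw [hux, h0]; simp
      rcases List.mem_append.mp hmem with hm | hm
      · obtain ⟨A, hA⟩ := nt_mem_emb1 hm; simp at hA
      · obtain ⟨B, hB⟩ := nt_mem_emb2 hm; simp at hB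
    · -- a rule of G₁
      subst he
      have hkey : ∃ t, α.map emb1 = x ++ Symb.nt (some (Sum.inl r₁.1)) :: t ∧
          y = t ++ β.map emb2 := by
        rcases List.append_eq_append_iff.mp hux with ⟨a', hxa, hba⟩ | ⟨c', hac, hcy⟩
        · exfalso
          obtain ⟨B, hB⟩ := nt_mem_emb2 (c := some (Sum.inl r₁.1)) (β := β)
            (by rw [hba]; simp)
          simp at hB
        · cases c' with
          | nil =>
            exfalso
            simp only [List.nil_append] at hcy
            obtain ⟨B, hB⟩ := nt_mem_emb2 (c := some (Sum.inl r₁.1)) (β := β)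
              (by rw [← hcy]; simp)
            simp at hB
          | cons c0 c'' =>
            simp only [List.cons_append, List.cons.injEq] at hcy
            exact ⟨c'', by rw [hac, hcy.1], hcy.2⟩
      obtain ⟨t, hαx, hyt⟩ := hkey
      obtain ⟨α₁, α₂, hα, hx1, ht1⟩ := map_emb1_eq_split hαx
      have hv' : (List.map emb1 (α₁ ++ r₁.2 ++ α₂)) ++ β.map emb2 =
          x ++ (r₁.2.map emb1) ++ y := by
        simp [hx1, hyt, ht1, List.map_append]
      have hcap : CapOK κ₁ α ∧ CapOK κ₂ β := capOK_join.mp hcu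
      have hcap' : CapOK κ₁ (α₁ ++ r₁.2 ++ α₂) ∧ CapOK κ₂ β := capOK_join.mp (by
        rw [hv']; simpa [hv] using hcv)
      obtain ⟨w₁, w₂, hw, d1, d2⟩ := ih (α₁ ++ r₁.2 ++ α₂) β w (by rw [hv]; exact hv'.symm) hz
      refine ⟨w₁, w₂, hw, Relation.ReflTransGen.head ?_ d1, d2⟩
      exact ⟨⟨r₁, hr₁, α₁, α₂, hα, rfl⟩, hcap.1, hcap'.1⟩
    · -- a rule of G₂
      subst he
      have hkey : ∃ a', x = α.map emb1 ++ a' ∧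
          β.map emb2 = a' ++ Symb.nt (some (Sum.inr r₂.1)) :: y := by
        rcases List.append_eq_append_iff.mp hux with ⟨a', hxa, hba⟩ | ⟨c', hac, hcy⟩
        · exact ⟨a', hxa, hba⟩
        · cases c' with
          | nil => exact ⟨[], by simp [hac], by simpa using hcy.symm⟩
          | cons c0 c'' =>
            exfalso
            simp only [List.cons_append, List.cons.injEq] at hcy
            obtain ⟨A, hA⟩ := nt_mem_emb1 (c := some (Sum.inr r₂.1)) (α := α)
              (by rw [hac, ← hcy.1]; simp)
            simp at hA
      obtain ⟨a', hxa, hba⟩ := hkey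
      obtain ⟨β₁, β₂, hβ, hx2, hy2⟩ := map_emb2_eq_split hba
      have hv' : (α.map emb1 ++ (List.map emb2 (β₁ ++ r₂.2 ++ β₂))) =
          x ++ (r₂.2.map emb2) ++ y := by
        simp [hxa, hx2, hy2, List.map_append]
      have hcap : CapOK κ₁ α ∧ CapOK κ₂ β := capOK_join.mp hcu
      have hcap' : CapOK κ₁ α ∧ CapOK κ₂ (β₁ ++ r₂.2 ++ β₂) := capOK_join.mp (by
        rw [hv']; simpa [hv] using hcv)
      obtain ⟨w₁, w₂, hw, d1, d2⟩ := ih α (β₁ ++ r₂.2 ++ β₂) w (by rw [hv]; exact hv'.symm) hz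
      refine ⟨w₁, w₂, hw, d1, Relation.ReflTransGen.head ?_ d2⟩
      exact ⟨⟨r₂, hr₂, β₁, β₂, hβ, rfl⟩, hcap.2, hcap'.2⟩

lemma capOK_of_deriv {N : Type} {G : CFG N T} {κ : N → ℕ} {w : List T}
    (h : Relation.ReflTransGen (G.CapStep κ) [Symb.nt G.start] (w.map Symb.tm)) :
    CapOK κ ([Symb.nt G.start] : List (Symb N T)) := by
  rcases h.cases_head with heq | ⟨c, hstep, _⟩
  · exfalso; cases w <;> simp_all
  · exact hstep.2.1

lemma lift1 {β : List (Symb N₂ T)} (hβ : CapOK κ₂ β)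
    {α α' : List (Symb N₁ T)} (h : Relation.ReflTransGen (G₁.CapStep κ₁) α α') :
    Relation.ReflTransGen ((concatG G₁ G₂).CapStep (κJoin κ₁ κ₂))
      (α.map emb1 ++ β.map emb2) (α'.map emb1 ++ β.map emb2) := by
  refine Relation.ReflTransGen.lift (fun l : List (Symb N₁ T) => l.map emb1 ++ β.map emb2) ?_ _ _ h
  rintro a b ⟨⟨r, hr, x, y, hx, hy⟩, hca, hcb⟩
  refine ⟨⟨(some (Sum.inl r.1), r.2.map emb1),
    mem_concatG_rules.mpr (Or.inr (Or.inl ⟨r, hr, rfl⟩)),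
    x.map emb1, y.map emb1 ++ β.map emb2, ?_, ?_⟩, ?_, ?_⟩
  · simp [hx, emb1, List.map_append]
  · simp [hy, List.map_append]
  · exact capOK_join.mpr ⟨hca, hβ⟩
  · exact capOK_join.mpr ⟨hcb, hβ⟩

lemma lift2 {t : List T}
    {β β' : List (Symb N₂ T)} (h : Relation.ReflTransGen (G₂.CapStep κ₂) β β') :
    Relation.ReflTransGen ((concatG G₁ G₂).CapStep (κJoin κ₁ κ₂))
      (t.map Symb.tm ++ β.map emb2) (t.map Symb.tm ++ β'.map emb2) := by
  refine Relation.ReflTransGen.lift (fun l : List (Symb N₂ T) => t.map Symb.tm ++ l.map emb2) ?_ _ _ h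
  rintro a b ⟨⟨r, hr, x, y, hx, hy⟩, hca, hcb⟩
  refine ⟨⟨(some (Sum.inr r.1), r.2.map emb2),
    mem_concatG_rules.mpr (Or.inr (Or.inr ⟨r, hr, rfl⟩)),
    t.map Symb.tm ++ x.map emb2, y.map emb2, ?_, ?_⟩, ?_, ?_⟩
  · simp [hx, emb2, List.map_append]
  · simp [hy, List.map_append]
  · exact capOK_tm_emb2 hca
  · exact capOK_tm_emb2 hcb

end Concat

/-- CF_cb is closed under concatenation. -/
theorem CFcb_closed_concat (T : Type) (L₁ L₂ : Set (List T))
    (h₁ : L₁ ∈ CFcb T) (h₂ : L₂ ∈ CFcb T) :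
    { w | ∃ u ∈ L₁, ∃ v ∈ L₂, w = u ++ v } ∈ CFcb T := by
  obtain ⟨N₁, i₁, G₁, κ₁, rfl⟩ := h₁
  obtain ⟨N₂, i₂, G₂, κ₂, rfl⟩ := h₂
  refine ⟨Option (N₁ ⊕ N₂), by infer_instance, concatG G₁ G₂, κJoin κ₁ κ₂, ?_⟩
  ext w
  simp only [Set.mem_setOf_eq]
  constructor
  · rintro ⟨u, hu, v, hv, rfl⟩
    have hcu : CapOK κ₁ [Symb.nt G₁.start] := capOK_of_deriv hu
    have hcv : CapOK κ₂ [Symb.nt G₂.start] := capOK_of_deriv hv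
    refine Relation.ReflTransGen.head (b :=
      [Symb.nt (some (Sum.inl G₁.start)), Symb.nt (some (Sum.inr G₂.start))]) ?_ ?_
    · refine ⟨⟨_, mem_concatG_rules.mpr (Or.inl rfl), [], [],
        by simp [concatG], by simp⟩, ?_, ?_⟩
      · intro c
        match c with
        | none => simp [symCount, κJoin, concatG]
        | some (Sum.inl A) => simp [symCount, κJoin, concatG]
        | some (Sum.inr B) => simp [symCount, κJoin, concatG]
      · have : ([Symb.nt (some (Sum.inl G₁.start)),
            Symb.nt (some (Sum.inr G₂.start))] : List (Symb (Option (N₁ ⊕ N₂)) T)) =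
            ([Symb.nt G₁.start] : List (Symb N₁ T)).map emb1 ++
            ([Symb.nt G₂.start] : List (Symb N₂ T)).map emb2 := by simp [emb1, emb2]
        rw [this]
        exact capOK_join.mpr ⟨hcu, hcv⟩
    · have step1 := lift1 (G₁ := G₁) (G₂ := G₂) (β := [Symb.nt G₂.start]) hcv hu
      have step2 := lift2 (G₁ := G₁) (G₂ := G₂) (κ₁ := κ₁) (t := u) hv
      have e1 : ([Symb.nt G₁.start] : List (Symb N₁ T)).map emb1 ++
          ([Symb.nt G₂.start] : List (Symb N₂ T)).map emb2 =
          [Symb.nt (some (Sum.inl G₁.start)), Symb.nt (some (Sum.inr G₂.start))] := by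
        simp [emb1, emb2]
      have e2 : ((u.map Symb.tm : List (Symb N₁ T))).map (emb1 (N₂ := N₂)) = u.map Symb.tm := by
        induction u with
        | nil => simp
        | cons a u ih => simpa [emb1] using ih
      have e3 : ((v.map Symb.tm : List (Symb N₂ T))).map (emb2 (N₁ := N₁)) = v.map Symb.tm := by
        induction v with
        | nil => simp
        | cons a v ih => simpa [emb2] using ih
      rw [e1, e2] at step1
      rw [e3] at step2
      rw [show (u ++ v).map Symb.tm = u.map Symb.tm ++ v.map Symb.tm from
        List.map_append]
      exact step1.trans step2
  · intro hw
    rcases hw.cases_head with heq | ⟨c, hstep, hrest⟩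
    · exfalso; cases w <;> simp_all [concatG]
    · obtain ⟨⟨r, hr, x, y, hx, hy⟩, _, hcv⟩ := hstep
      have hxy : x = [] ∧ r.1 = (concatG G₁ G₂).start ∧ y = [] := by
        rcases x with _ | ⟨a, x'⟩
        · rw [List.nil_append] at hx
          injection hx with h1 h2
          injection h1 with h1
          exact ⟨rfl, h1.symm, h2.symm⟩
        · rw [List.cons_append] at hx
          injection hx with h1 h2
          simp at h2
      obtain ⟨hx0, hr1, hy0⟩ := hxy
      have hr1' : r.1 = none := by
        simpa [concatG] using hr1
      have hrs : r = (none,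
          [Symb.nt (some (Sum.inl G₁.start)), Symb.nt (some (Sum.inr G₂.start))]) := by
        rcases mem_concatG_rules.mp hr with h0 | ⟨r₁, _, he⟩ | ⟨r₂, _, he⟩
        · exact h0
        · exfalso; rw [he] at hr1'; simp at hr1'
        · exfalso; rw [he] at hr1'; simp at hr1'
      have hc : c = ([Symb.nt G₁.start] : List (Symb N₁ T)).map emb1 ++
          ([Symb.nt G₂.start] : List (Symb N₂ T)).map emb2 := by
        rw [hy, hx0, hy0, hrs]; simp [emb1, emb2]
      obtain ⟨w₁, w₂, hw12, d1, d2⟩ := forward_main hrest _ _ w hc rfl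
      exact ⟨w₁, d1, w₂, d2, hw12⟩

end CapGram
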